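/- arXiv:2009.11521 — 2 statements merged into one kernel-verified Lean document; each statement's English description precedes it below -/
import Mathlib

section
/- Suppose X is a geodesic metric space and Y ⊂ X is a path-connected subspace that is a geodesic metric space with respect to the induced length metric d_Y, and suppose the inclusion map Y → X is uniformly metrically proper as measured by f: ℕ → ℕ. Then for every k ≥ 1 there is a constant k' = k'(k, f) such that every k-quasigeodesic of X whose image is contained in Y is a k'-quasigeodesic of (Y, d_Y). -/
/-! ### Core coarse-geometric definitions
Gromov products, hyperbolicity, Gromov boundaries, Cannon–Thurston maps,
word metrics, quasi-isometric embeddings, laminations. -/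

/-- The Gromov product of `x` and `y` with respect to the basepoint `o`,
for a distance function `d`. -/
noncomputable def gprod {X : Type*} (d : X → X → ℝ) (o x y : X) : ℝ :=
  (d x o + d y o - d x y) / 2

/-- A distance function is (Gromov) hyperbolic: the four point condition. -/
def IsHypD {X : Type*} (d : X → X → ℝ) : Prop :=
  ∃ δ : ℝ, 0 ≤ δ ∧ ∀ o x y z : X,
    min (gprod d o x y) (gprod d o y z) ≤ gprod d o x z + δ

/-- A sequence tends to infinity if its Gromov products tend to infinity. -/
def SeqToInf {X : Type*} (d : X → X → ℝ) (s : ℕ → X) : Prop :=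
  ∀ (o : X) (M : ℝ), ∃ N : ℕ, ∀ m n : ℕ, N ≤ m → N ≤ n → M ≤ gprod d o (s m) (s n)

/-- Two sequences tending to infinity determine the same boundary point. -/
def SeqFellow {X : Type*} (d : X → X → ℝ) (s t : ℕ → X) : Prop :=
  ∀ (o : X) (M : ℝ), ∃ N : ℕ, ∀ m n : ℕ, N ≤ m → N ≤ n → M ≤ gprod d o (s m) (t n)

/-- Sequences in `X` tending to infinity. -/
def BdryPre {X : Type*} (d : X → X → ℝ) : Type _ := { s : ℕ → X // SeqToInf d s }

/-- The (sequential model of the) Gromov boundary of `(X, d)`. -/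
def Bdry {X : Type*} (d : X → X → ℝ) : Type _ :=
  Quot fun s t : BdryPre d => SeqFellow d s.1 t.1

/-- The boundary point represented by a sequence tending to infinity. -/
def Bdry.mk {X : Type*} {d : X → X → ℝ} (s : BdryPre d) : Bdry d := Quot.mk _ s

/-- A sequence in `X` converges to the boundary point `ξ`. -/
def ConvTo {X : Type*} (d : X → X → ℝ) (s : ℕ → X) (ξ : Bdry d) : Prop :=
  ∃ h : SeqToInf d s, Bdry.mk ⟨s, h⟩ = ξ

/-- The visual topology on the Gromov boundary. -/
noncomputable instance bdryTopology {X : Type*} (d : X → X → ℝ) :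
    TopologicalSpace (Bdry d) :=
  TopologicalSpace.generateFrom
    { U | ∃ (o : X) (M : ℝ) (s : BdryPre d),
        U = { η | ∃ t : BdryPre d, Bdry.mk t = η ∧
          ∀ m n : ℕ, M ≤ gprod d o (s.1 m) (t.1 n) } }

/-- `g` is a Cannon–Thurston map for `f : (Y,dY) → (X,dX)`: it is continuous and,
whenever a sequence in `Y` converges to a boundary point `ξ`, the image sequence
converges to `g ξ`. -/
def IsCTMapD {Y X : Type*} (dY : Y → Y → ℝ) (dX : X → X → ℝ)
    (f : Y → X) (g : Bdry dY → Bdry dX) : Prop :=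
  Continuous g ∧
    ∀ (s : ℕ → Y) (ξ : Bdry dY), ConvTo dY s ξ → ConvTo dX (fun n => f (s n)) (g ξ)

/-- `f : (Y,dY) → (X,dX)` admits a Cannon–Thurston map. -/
def AdmitsCT {Y X : Type*} (dY : Y → Y → ℝ) (dX : X → X → ℝ) (f : Y → X) : Prop :=
  ∃ g, IsCTMapD dY dX f g

/-- The limit set of `A ⊆ X` in the Gromov boundary of `(X,d)`. -/
def limitSetD {X : Type*} (d : X → X → ℝ) (A : Set X) : Set (Bdry d) :=
  { ξ | ∃ s : ℕ → X, (∀ n, s n ∈ A) ∧ ConvTo d s ξ }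

/-- Quasi-isometric embedding with multiplicative/additive constant `k`. -/
def IsQIEmbWith {Y X : Type*} (dY : Y → Y → ℝ) (dX : X → X → ℝ) (k : ℝ) (f : Y → X) : Prop :=
  ∀ y y' : Y, dY y y' / k - k ≤ dX (f y) (f y') ∧ dX (f y) (f y') ≤ k * dY y y' + k

/-- Quasi-isometric embedding. -/
def IsQIEmbD {Y X : Type*} (dY : Y → Y → ℝ) (dX : X → X → ℝ) (f : Y → X) : Prop :=
  ∃ k : ℝ, 1 ≤ k ∧ IsQIEmbWith dY dX k f

/-- `A` is contained in a finite (`d`-)neighborhood of `B`. -/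
def InFiniteNbhd {X : Type*} (d : X → X → ℝ) (A B : Set X) : Prop :=
  ∃ D : ℝ, ∀ a ∈ A, ∃ b ∈ B, d a b ≤ D

/-- The word length of `g` with respect to `S` (inverses of generators allowed). -/
noncomputable def wordLength {G : Type*} [Group G] (S : Set G) (g : G) : ℕ :=
  sInf { n : ℕ | ∃ l : List G, (∀ x ∈ l, x ∈ S ∨ x⁻¹ ∈ S) ∧ l.length = n ∧ l.prod = g }

/-- The word metric on `G` with respect to `S`. -/
noncomputable def wordDist {G : Type*} [Group G] (S : Set G) (g h : G) : ℝ :=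
  wordLength S (g⁻¹ * h)

/-- `S` is a finite generating set of `G`. -/
def GenSet {G : Type*} [Group G] (S : Set G) : Prop :=
  S.Finite ∧ Subgroup.closure S = ⊤

/-- A finitely generated group is hyperbolic if some (equivalently, any) of its
word metrics with respect to a finite generating set is Gromov hyperbolic. -/
def IsHypGroup (G : Type*) [Group G] : Prop :=
  ∃ S : Set G, GenSet S ∧ IsHypD (wordDist S)

/-- The standard distance on `ℤ` (to parametrize (quasi)geodesic lines). -/
noncomputable def zdist : ℤ → ℤ → ℝ := fun m n => |(m : ℝ) - (n : ℝ)|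

/-- A quasigeodesic line in `(Y,dY)`. -/
def IsQGLine {Y : Type*} (dY : Y → Y → ℝ) (α : ℤ → Y) : Prop :=
  IsQIEmbD zdist dY α

/-- `α` is a leaf of the Cannon–Thurston lamination of `f`, whose CT map is `g`:
a quasigeodesic line whose two distinct endpoints at infinity are identified by `g`. -/
def IsLeafD {Y X : Type*} (dY : Y → Y → ℝ) (dX : X → X → ℝ)
    (f : Y → X) (g : Bdry dY → Bdry dX) (α : ℤ → Y) : Prop :=
  IsQGLine dY α ∧
  ∃ ξp ξm : Bdry dY,
    ConvTo dY (fun n : ℕ => α (n : ℤ)) ξp ∧ ConvTo dY (fun n : ℕ => α (-(n : ℤ))) ξm ∧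
    ξp ≠ ξm ∧ g ξp = g ξm

/-- A finitely generated subgroup `H ≤ G` is qi embedded (= quasiconvex when `G` is
hyperbolic, = undistorted): the inclusion is a quasi-isometric embedding for word
metrics coming from finite generating sets (this does not depend on the choices). -/
def QIEmbSubgroup {G : Type*} [Group G] (H : Subgroup G) : Prop :=
  ∃ (S : Set G) (T : Set ↥H), GenSet S ∧ GenSet T ∧
    IsQIEmbD (wordDist T) (wordDist S) (Subtype.val : ↥H → G)

/-- A group is virtually cyclic (elementary). -/
def VirtCyclic (G : Type*) [Group G] : Prop :=
  ∃ H : Subgroup G, (∃ g : G, H = Subgroup.zpowers g) ∧ H.index ≠ 0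

/-- A geodesic metric space. -/
def IsGeodesicMS (X : Type*) [MetricSpace X] : Prop :=
  ∀ x y : X, ∃ γ : ℝ → X, γ 0 = x ∧ γ (dist x y) = y ∧
    ∀ s ∈ Set.Icc (0:ℝ) (dist x y), ∀ t ∈ Set.Icc (0:ℝ) (dist x y),
      dist (γ s) (γ t) = |s - t|

/-!
The lower bound holds because `ι` is 1-Lipschitz. For the upper bound, parameters at distance
at most `1` are sent to points at `X`-distance at most `2k`, hence at `Y`-distance at most
`C = f ⌈2k⌉`; chaining `⌈|s - t|⌉` such steps along the parameter interval from `s` to `t`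
bounds `d_Y(α s, α t)` by `C |s - t| + C`.
-/

namespace Set.OrdConnected

variable {E : Type*} [PseudoMetricSpace E] {J : Set ℝ} {α : ℝ → E} {C : ℝ}

theorem dist_le_nat_mul (hJ : J.OrdConnected)
    (hC : ∀ s ∈ J, ∀ t ∈ J, |s - t| ≤ 1 → dist (α s) (α t) ≤ C) (n : ℕ) :
    ∀ s ∈ J, ∀ t ∈ J, |s - t| ≤ n → dist (α s) (α t) ≤ n * C := by
  induction n with
  | zero =>
    intro s _ t _ hst
    rw [Nat.cast_zero, abs_nonpos_iff, sub_eq_zero] at hst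
    simp [hst]
  | succ n ih =>
    intro s hs t ht hst
    have hn : (0 : ℝ) < n + 1 := by positivity
    set u := s + (n + 1 : ℝ)⁻¹ • (t - s) with hu
    have hu_mem : u ∈ J := hJ.convex.add_smul_sub_mem hs ht
      ⟨by positivity, inv_le_one_of_one_le₀ (by linarith [n.cast_nonneg (α := ℝ)])⟩
    have hsu : |s - u| ≤ 1 := by
      rw [hu, smul_eq_mul, sub_add_cancel_left, abs_neg, abs_mul, abs_inv, abs_of_pos hn,
        abs_sub_comm, inv_mul_le_iff₀ hn, mul_one]
      exact_mod_cast hst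
    have hut : |u - t| ≤ n := by
      have : u - t = (n / (n + 1) : ℝ) * (s - t) := by rw [hu, smul_eq_mul]; field_simp; ring
      rw [this, abs_mul, abs_of_nonneg (by positivity), div_mul_eq_mul_div, div_le_iff₀ hn]
      push_cast at hst
      nlinarith [n.cast_nonneg (α := ℝ)]
    calc dist (α s) (α t) ≤ dist (α s) (α u) + dist (α u) (α t) := dist_triangle _ _ _
      _ ≤ C + n * C := add_le_add (hC s hs u hu_mem hsu) (ih u hu_mem t ht hut)
      _ = (n + 1 : ℕ) * C := by push_cast; ring

theorem dist_le_mul_abs_sub_add (hJ : J.OrdConnected)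
    (hC : ∀ s ∈ J, ∀ t ∈ J, |s - t| ≤ 1 → dist (α s) (α t) ≤ C) {s t : ℝ} (hs : s ∈ J)
    (ht : t ∈ J) : dist (α s) (α t) ≤ C * |s - t| + C := by
  have hC0 : 0 ≤ C := dist_nonneg.trans (hC s hs s hs (by simp))
  have hceil : (⌈|s - t|⌉₊ : ℝ) < |s - t| + 1 := Nat.ceil_lt_add_one (abs_nonneg _)
  calc dist (α s) (α t) ≤ ⌈|s - t|⌉₊ * C := hJ.dist_le_nat_mul hC _ s hs t ht (Nat.le_ceil _)
    _ ≤ (|s - t| + 1) * C := by gcongr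
    _ = C * |s - t| + C := by ring

end Set.OrdConnected

/-- If `Y ⊆ X` is a path-connected subspace of a geodesic metric
space `X`, itself geodesic for the induced length metric (so that the inclusion
`ι : Y → X` is 1-Lipschitz), and the inclusion is uniformly metrically proper as
measured by `f : ℕ → ℕ`, then for every `k ≥ 1` there is `k' = k'(k, f)` such that
every `k`-quasigeodesic of `X` contained in `Y` is a `k'`-quasigeodesic of `Y`. -/
theorem stmt_1 (f : ℕ → ℕ) (k : ℝ) (hk : 1 ≤ k) :
    ∃ k' : ℝ, 1 ≤ k' ∧
      ∀ (X : Type u) (Y : Type v) [MetricSpace X] [MetricSpace Y],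
        ProperSpace X → IsGeodesicMS X → IsGeodesicMS Y →
        ∀ ι : Y → X, Function.Injective ι →
          (∀ y y' : Y, dist (ι y) (ι y') ≤ dist y y') →
          (∀ (y y' : Y) (R : ℕ), dist (ι y) (ι y') ≤ (R : ℝ) → dist y y' ≤ (f R : ℝ)) →
          ∀ J : Set ℝ, J.OrdConnected →
            ∀ α : ℝ → Y,
              (∀ s ∈ J, ∀ t ∈ J,
                |s - t| / k - k ≤ dist (ι (α s)) (ι (α t)) ∧
                  dist (ι (α s)) (ι (α t)) ≤ k * |s - t| + k) →
              (∀ s ∈ J, ∀ t ∈ J,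
                |s - t| / k' - k' ≤ dist (α s) (α t) ∧
                  dist (α s) (α t) ≤ k' * |s - t| + k') := by
  set C : ℝ := ((f ⌈2 * k⌉₊ : ℕ) : ℝ)
  have hC0 : 0 ≤ C := Nat.cast_nonneg _
  refine ⟨k + C, by linarith, ?_⟩
  intro X Y _ _ _ _ _ ι _ hlip hproper J hJ α hα s hs t ht
  have hlocal : ∀ s ∈ J, ∀ t ∈ J, |s - t| ≤ 1 → dist (α s) (α t) ≤ C :=
    fun s hs t ht hst => hproper _ _ _ <|
      calc dist (ι (α s)) (ι (α t)) ≤ k * |s - t| + k := (hα s hs t ht).2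
        _ ≤ 2 * k := by nlinarith
        _ ≤ ⌈2 * k⌉₊ := Nat.le_ceil _
  constructor
  · calc |s - t| / (k + C) - (k + C) ≤ |s - t| / k - k := by
          gcongr <;> linarith
      _ ≤ dist (ι (α s)) (ι (α t)) := (hα s hs t ht).1
      _ ≤ dist (α s) (α t) := hlip _ _
  · calc dist (α s) (α t) ≤ C * |s - t| + C := hJ.dist_le_mul_abs_sub_add hlocal hs ht
      _ ≤ (k + C) * |s - t| + (k + C) := by nlinarith [abs_nonneg (s - t)]
end

section
/- Let G be a finitely presented group and H, K two subgroups of G with H finitely generated. Let S ⊂ G and S₁ ⊂ H be finite generating sets with Cayley graphs Γ = Γ(G, S) and Γ₁ = Γ(H, S₁). Let D > 0 and suppose A is an infinite subset of N_D(K) ∩ H, where N_D(K) is the D-neighborhood of K in Γ. Suppose there exists r ≥ 1 such that any pair of points of A can be connected by a path lying in the r-neighborhood of A in Γ₁. Then there is a finitely generated infinite subgroup K₁ < H ∩ K such that A/K₁ is finite; in particular, A is contained in a finite neighborhood of K₁ in Γ. -/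
/-- A finitely presented group. -/
def IsFinitelyPresentedGroup (G : Type*) [Group G] : Prop :=
  ∃ (n : ℕ) (rels : Set (FreeGroup (Fin n))),
    rels.Finite ∧ Nonempty (PresentedGroup rels ≃* G)

/-!
Each `a ∈ A` is `k b⁻¹` with `k ∈ K` and `b` in the finite `D`-ball of `Γ`; fixing one
representative `t ∈ A` for each `b` that occurs gives finitely many `t` with `a t⁻¹ ∈ H ∩ K`.
Walking from `t` to `a` through `A` with jumps of `Γ₁`-length at most `2r + 1`, consecutive
points `x, y` with representatives `s, s'` satisfy
`y s'⁻¹ = (x s⁻¹) (s x⁻¹ y s'⁻¹)`, where the second factor lies in `H ∩ K` and has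
`Γ₁`-length bounded independently of `x, y`. So `K₁`, generated by the finitely many elements
of `H ∩ K` within that bound, contains every `a t⁻¹`; it is infinite because `A ⊆ K₁ T`.
-/

section WordMetric

variable {G : Type*} [Group G] {S : Set G}

theorem wordLength_list_prod_le {l : List G} (hl : ∀ x ∈ l, x ∈ S ∨ x⁻¹ ∈ S) :
    wordLength S l.prod ≤ l.length :=
  Nat.sInf_le ⟨l, hl, rfl, rfl⟩

theorem exists_list_length_eq_wordLength (hS : Subgroup.closure S = ⊤) (g : G) :
    ∃ l : List G, (∀ x ∈ l, x ∈ S ∨ x⁻¹ ∈ S) ∧ l.length = wordLength S g ∧ l.prod = g := by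
  have hg : g ∈ Submonoid.closure (S ∪ S⁻¹) := by
    rw [← Subgroup.closure_toSubmonoid, hS]
    trivial
  obtain ⟨l, hl, hprod⟩ := Submonoid.exists_list_of_mem_closure hg
  exact Nat.sInf_mem
    (s := {n | ∃ l : List G, (∀ x ∈ l, x ∈ S ∨ x⁻¹ ∈ S) ∧ l.length = n ∧ l.prod = g})
    ⟨l.length, l, hl, rfl, hprod⟩

theorem wordLength_one : wordLength S (1 : G) = 0 :=
  Nat.le_zero.mp (wordLength_list_prod_le (l := []) (by simp))

theorem wordLength_mul_le (hS : Subgroup.closure S = ⊤) (g h : G) :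
    wordLength S (g * h) ≤ wordLength S g + wordLength S h := by
  obtain ⟨l₁, hl₁, hlen₁, rfl⟩ := exists_list_length_eq_wordLength hS g
  obtain ⟨l₂, hl₂, hlen₂, rfl⟩ := exists_list_length_eq_wordLength hS h
  rw [← hlen₁, ← hlen₂, ← List.prod_append, ← List.length_append]
  exact wordLength_list_prod_le fun x hx => (List.mem_append.mp hx).elim (hl₁ x) (hl₂ x)

theorem wordLength_inv_le (hS : Subgroup.closure S = ⊤) (g : G) :
    wordLength S g⁻¹ ≤ wordLength S g := by
  obtain ⟨l, hl, hlen, rfl⟩ := exists_list_length_eq_wordLength hS g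
  rw [← hlen, List.prod_inv_reverse]
  refine (wordLength_list_prod_le ?_).trans (by simp)
  simp only [List.mem_reverse, List.mem_map]
  rintro _ ⟨y, hy, rfl⟩
  rw [inv_inv]
  exact (hl y hy).symm

theorem wordLength_inv (hS : Subgroup.closure S = ⊤) (g : G) :
    wordLength S g⁻¹ = wordLength S g :=
  le_antisymm (wordLength_inv_le hS g) (by simpa using wordLength_inv_le hS g⁻¹)

theorem finite_setOf_wordLength_le (hS : GenSet S) (n : ℕ) :
    {g : G | wordLength S g ≤ n}.Finite := by
  have : Finite ↥(S ∪ S⁻¹) := (hS.1.union hS.1.inv).to_subtype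
  refine ((List.finite_length_le ↥(S ∪ S⁻¹) n).image
    fun l => (l.map Subtype.val).prod).subset fun g hg => ?_
  obtain ⟨l, hl, hlen, rfl⟩ := exists_list_length_eq_wordLength hS.2 g
  lift l to List ↥(S ∪ S⁻¹) using hl
  exact ⟨l, by simpa using hlen.trans_le hg, rfl⟩

theorem wordDist_nonneg (g h : G) : 0 ≤ wordDist S g h :=
  Nat.cast_nonneg _

theorem wordDist_self (g : G) : wordDist S g g = 0 := by
  simp [wordDist, wordLength_one]

theorem wordDist_comm (hS : Subgroup.closure S = ⊤) (g h : G) :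
    wordDist S g h = wordDist S h g := by
  rw [wordDist, wordDist, ← wordLength_inv hS, mul_inv_rev, inv_inv]

theorem wordDist_triangle (hS : Subgroup.closure S = ⊤) (g h k : G) :
    wordDist S g k ≤ wordDist S g h + wordDist S h k := by
  have := wordLength_mul_le hS (g⁻¹ * h) (h⁻¹ * k)
  rw [mul_assoc, mul_inv_cancel_left] at this
  unfold wordDist
  exact_mod_cast this

theorem wordDist_mul_self (g t : G) : wordDist S (g * t) g = wordLength S t⁻¹ := by
  simp [wordDist, mul_assoc]

end WordMetric

def CoarselyConnected {X : Type*} (d : X → X → ℝ) (M : ℝ) (A : Set X) : Prop :=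
  ∀ a ∈ A, ∀ a' ∈ A, Relation.ReflTransGen (fun x y => y ∈ A ∧ d x y ≤ M) a a'

section CoarseConnectivity

variable {G : Type*} [Group G] {S : Set G}

theorem coarselyConnected_of_path (hS : Subgroup.closure S = ⊤) {A : Set G} {r : ℝ}
    (hpath : ∀ a ∈ A, ∀ a' ∈ A, ∃ (n : ℕ) (c : ℕ → G),
      c 0 = a ∧ c n = a' ∧
      (∀ i < n, wordDist S (c i) (c (i + 1)) ≤ 1) ∧
      (∀ i ≤ n, ∃ b ∈ A, wordDist S (c i) b ≤ r)) :
    CoarselyConnected (wordDist S) (2 * r + 1) A := by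
  intro a ha a' ha'
  obtain ⟨n, c, rfl, rfl, hstep, hnear⟩ := hpath a ha a' ha'
  have hr : 0 ≤ r := by
    obtain ⟨b, -, hb⟩ := hnear 0 n.zero_le
    exact (wordDist_nonneg _ _).trans hb
  suffices ∀ i ≤ n, ∀ b ∈ A, wordDist S (c i) b ≤ r →
      Relation.ReflTransGen (fun x y => y ∈ A ∧ wordDist S x y ≤ 2 * r + 1) (c 0) b from
    this n le_rfl (c n) ha' (by rw [wordDist_self]; exact hr)
  intro i
  induction i with
  | zero => exact fun _ b hb hcb => .single ⟨hb, by linarith⟩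
  | succ i ih =>
    intro hi b' hb' hcb'
    obtain ⟨b, hb, hcb⟩ := hnear i (by omega)
    refine (ih (by omega) b hb hcb).tail ⟨hb', ?_⟩
    calc wordDist S b b'
        ≤ wordDist S b (c i) + (wordDist S (c i) (c (i + 1)) + wordDist S (c (i + 1)) b') :=
          (wordDist_triangle hS _ (c i) _).trans (by gcongr; exact wordDist_triangle hS _ _ _)
      _ ≤ r + (1 + r) := by
          rw [wordDist_comm hS]
          gcongr
          exact hstep i (by omega)
      _ = 2 * r + 1 := by ring

theorem exists_fg_le_forall_mul_inv_mem (hS : GenSet S) (L : Subgroup G) {A T : Set G} {M : ℝ}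
    (hA : CoarselyConnected (wordDist S) M A) (hTA : T ⊆ A) (hT : T.Finite)
    (hcover : ∀ a ∈ A, ∃ t ∈ T, a * t⁻¹ ∈ L) :
    ∃ K₁ : Subgroup G, K₁ ≤ L ∧ K₁.FG ∧ ∀ a ∈ A, ∃ t ∈ T, a * t⁻¹ ∈ K₁ := by
  obtain ⟨C, hC⟩ := (hT.image (wordLength S)).bddAbove
  set X := {k : G | k ∈ L ∧ wordLength S k ≤ C + ⌊M⌋₊ + C}
  have hX : X.Finite := (finite_setOf_wordLength_le hS _).subset fun k hk => hk.2
  have hXL : Subgroup.closure X ≤ L := (Subgroup.closure_le L).2 fun k hk => hk.1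
  refine ⟨Subgroup.closure X, hXL, ⟨hX.toFinset, by simp⟩, fun a ha => ?_⟩
  obtain ⟨t, ht, -⟩ := hcover a ha
  have hchain := hA t (hTA ht) a ha
  clear ha
  induction hchain with
  | refl => exact ⟨t, ht, by simp [one_mem]⟩
  | @tail b c _ hbc ih =>
    obtain ⟨s, hs, hbs⟩ := ih
    obtain ⟨s', hs', hcs'⟩ := hcover c hbc.1
    have hstep : s * (b⁻¹ * c) * s'⁻¹ ∈ X := by
      refine ⟨?_, ?_⟩
      · convert L.mul_mem (L.inv_mem (hXL hbs)) hcs' using 1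
        group
      · have hbc' : wordLength S (b⁻¹ * c) ≤ ⌊M⌋₊ := Nat.le_floor hbc.2
        calc wordLength S (s * (b⁻¹ * c) * s'⁻¹)
            ≤ wordLength S s + wordLength S (b⁻¹ * c) + wordLength S s'⁻¹ :=
              (wordLength_mul_le hS.2 _ _).trans
                (Nat.add_le_add_right (wordLength_mul_le hS.2 _ _) _)
          _ ≤ C + ⌊M⌋₊ + C := by
              rw [wordLength_inv hS.2]
              gcongr
              exacts [hC ⟨s, hs, rfl⟩, hC ⟨s', hs', rfl⟩]
    refine ⟨s', hs', ?_⟩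
    convert (Subgroup.closure X).mul_mem hbs (Subgroup.subset_closure hstep) using 1
    group

end CoarseConnectivity

theorem Subgroup.FG.map {G N : Type*} [Group G] [Group N] {L : Subgroup G} (hL : L.FG)
    (f : G →* N) : (L.map f).FG := by
  classical
  obtain ⟨s, rfl⟩ := hL
  exact ⟨s.image f, by rw [Finset.coe_image, MonoidHom.map_closure]⟩

theorem exists_finite_subset_forall_mul_inv_mem_comap {H G : Type*} [Group H] [Group G]
    (φ : H →* G) (K : Subgroup G) {A : Set H} {B : Set G} (hB : B.Finite)
    (hA : ∀ a ∈ A, ∃ k ∈ K, (φ a)⁻¹ * k ∈ B) :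
    ∃ T ⊆ A, T.Finite ∧ ∀ a ∈ A, ∃ t ∈ T, a * t⁻¹ ∈ K.comap φ := by
  choose! k hkK hkB using hA
  obtain ⟨T, hTA, hbij⟩ := Set.exists_subset_bijOn A fun a => (φ a)⁻¹ * k a
  refine ⟨T, hTA, ?_, fun a ha => ?_⟩
  · refine Set.Finite.of_finite_image (hB.subset ?_) hbij.injOn
    rw [hbij.image_eq]
    exact Set.image_subset_iff.2 hkB
  · obtain ⟨t, ht, hta : (φ t)⁻¹ * k t = (φ a)⁻¹ * k a⟩ := hbij.surjOn ⟨a, ha, rfl⟩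
    refine ⟨t, ht, ?_⟩
    have : φ (a * t⁻¹) = k a * (k t)⁻¹ :=
      calc φ (a * t⁻¹) = φ a * ((φ t)⁻¹ * k t) * (k t)⁻¹ := by rw [map_mul, map_inv]; group
        _ = k a * (k t)⁻¹ := by rw [hta]; group
    rw [Subgroup.mem_comap, this]
    exact K.mul_mem (hkK a ha) (K.inv_mem (hkK t (hTA ht)))

theorem stmt_3_general {G : Type*} [Group G]
    (H K : Subgroup G)
    (S : Set G) (hS : GenSet S)
    (S₁ : Set ↥H) (hS₁ : GenSet S₁)
    (D : ℝ)
    (A : Set ↥H) (hAinf : A.Infinite)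
    (hAnbhd : ∀ a ∈ A, ∃ k ∈ K, wordDist S (a : G) k ≤ D)
    (r : ℝ)
    (hpath : ∀ a ∈ A, ∀ a' ∈ A, ∃ (n : ℕ) (c : ℕ → ↥H),
      c 0 = a ∧ c n = a' ∧
      (∀ i < n, wordDist S₁ (c i) (c (i + 1)) ≤ 1) ∧
      (∀ i ≤ n, ∃ b ∈ A, wordDist S₁ (c i) b ≤ r)) :
    ∃ K₁ : Subgroup G, K₁ ≤ H ⊓ K ∧ K₁.FG ∧ (K₁ : Set G).Infinite ∧
      (∃ T : Set ↥H, T.Finite ∧ ∀ a ∈ A, ∃ g ∈ K₁, ∃ t ∈ T, (a : G) = g * (t : G)) ∧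
      (∃ R : ℝ, ∀ a ∈ A, ∃ g ∈ K₁, wordDist S (a : G) g ≤ R) := by
  obtain ⟨T, hTA, hT, hcover⟩ := exists_finite_subset_forall_mul_inv_mem_comap H.subtype K
    (finite_setOf_wordLength_le hS ⌊D⌋₊)
    fun a ha => (hAnbhd a ha).imp fun _ hk => ⟨hk.1, Nat.le_floor hk.2⟩
  obtain ⟨L, hLK, hLfg, hLA⟩ := exists_fg_le_forall_mul_inv_mem hS₁ (K.comap H.subtype)
    (coarselyConnected_of_path hS₁.2 hpath) hTA hT hcover
  have hA : ∀ a ∈ A, ∃ g ∈ L.map H.subtype, ∃ t ∈ T, (a : G) = g * t := fun a ha =>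
    let ⟨t, ht, hat⟩ := hLA a ha
    ⟨_, ⟨_, hat, rfl⟩, t, ht, by simp⟩
  refine ⟨L.map H.subtype, ?_, hLfg.map _, fun hfin => hAinf ?_, ⟨T, hT, hA⟩, ?_⟩
  · rintro _ ⟨k, hk, rfl⟩
    exact ⟨k.2, hLK hk⟩
  · refine ((hfin.mul (hT.image Subtype.val)).preimage Subtype.val_injective.injOn).subset ?_
    intro a ha
    obtain ⟨g, hg, t, ht, hat⟩ := hA a ha
    exact ⟨g, hg, t, ⟨t, ht, rfl⟩, hat.symm⟩
  · obtain ⟨R, hR⟩ := (hT.image fun t : ↥H => wordLength S (t : G)⁻¹).bddAbove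
    refine ⟨R, fun a ha => ?_⟩
    obtain ⟨g, hg, t, ht, hat⟩ := hA a ha
    refine ⟨g, hg, ?_⟩
    rw [hat, wordDist_mul_self]
    exact_mod_cast hR ⟨t, ht, rfl⟩

/-- Proposition 2.2. Let `G` be a finitely presented group, `H, K`
subgroups with `H` finitely generated, `S`, `S₁` finite generating sets of `G`, `H`
with Cayley graphs `Γ = Γ(G,S)`, `Γ₁ = Γ(H,S₁)`. Let `D > 0` and let `A` be an
infinite subset of `N_D(K) ∩ H` (neighborhood in `Γ`). Suppose any two points of `A`
are connected by a path (a chain of steps of length `≤ 1` in `Γ₁`) lying in the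
`r`-neighborhood of `A` in `Γ₁`, for some `r ≥ 1`. Then there is a finitely
generated infinite subgroup `K₁ ≤ H ⊓ K` such that `A/K₁` is finite; in particular
`A` lies in a finite neighborhood of `K₁` in `Γ`. -/
theorem stmt_3 {G : Type*} [Group G]
    (hfp : IsFinitelyPresentedGroup G)
    (H K : Subgroup G)
    (S : Set G) (hS : GenSet S)
    (S₁ : Set ↥H) (hS₁ : GenSet S₁)
    (D : ℝ) (hD : 0 < D)
    (A : Set ↥H) (hAinf : A.Infinite)
    (hAnbhd : ∀ a ∈ A, ∃ k ∈ K, wordDist S (a : G) k ≤ D)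
    (r : ℝ) (hr : 1 ≤ r)
    (hpath : ∀ a ∈ A, ∀ a' ∈ A, ∃ (n : ℕ) (c : ℕ → ↥H),
      c 0 = a ∧ c n = a' ∧
      (∀ i < n, wordDist S₁ (c i) (c (i + 1)) ≤ 1) ∧
      (∀ i ≤ n, ∃ b ∈ A, wordDist S₁ (c i) b ≤ r)) :
    ∃ K₁ : Subgroup G, K₁ ≤ H ⊓ K ∧ K₁.FG ∧ (K₁ : Set G).Infinite ∧
      (∃ T : Set ↥H, T.Finite ∧ ∀ a ∈ A, ∃ g ∈ K₁, ∃ t ∈ T, (a : G) = g * (t : G)) ∧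
      (∃ R : ℝ, ∀ a ∈ A, ∃ g ∈ K₁, wordDist S (a : G) g ≤ R) :=
  stmt_3_general H K S hS S₁ hS₁ D A hAinf hAnbhd r hpath
end
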